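/- arXiv:2410.21045 — 4 statements merged into one kernel-verified Lean document; each statement's English description precedes it below -/
import Mathlib

section
/- Let ℋ : ℝ × ℝ × ]0,+∞[ → ℝ be C¹ with ∂_ρ ℋ > 0 and let Ψ be C¹ with ℋ(τ,ϑ,Ψ(ϑ,τ,h)) = h for all (ϑ,τ,h). Let (θ,ρ) : I → ℝ × ]0,+∞[ solve θ̇ = ∂_ρ ℋ(t,θ,ρ), −ρ̇ = ∂_θ ℋ(t,θ,ρ), with θ̇(t) > 0 on I, let τ : J → I be the inverse of θ, and define h(ϑ) = ℋ(τ(ϑ), ϑ, ρ(τ(ϑ))). Then (τ, h) solves the system τ' = ∂_h Ψ(ϑ,τ,h), −h' = ∂_τ Ψ(ϑ,τ,h) on J. -/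
/-!
Fix an angle `ϑ` and put `t = τ ϑ`, `r = ρ t`. Since `∂_ρ ℋ ≠ 0`, the map `(t, r) ↦ (t, ℋ(t, ϑ, r))`
is a local diffeomorphism and `(t, h) ↦ (t, Ψ(ϑ, t, h))` is a local left inverse of it, so the
inverse function theorem gives `∂_h Ψ = 1 / ∂_ρ ℋ` and `∂_τ Ψ = -∂_t ℋ / ∂_ρ ℋ`. On the other side,
`τ' = 1 / θ̇ = 1 / ∂_ρ ℋ`, and by the chain rule
`h' = ∂_t ℋ · τ' + ∂_θ ℋ + ∂_ρ ℋ · ρ̇ · τ' = ∂_t ℋ / ∂_ρ ℋ`,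
the last two terms cancelling because `ρ̇ = -∂_θ ℋ`.
-/

open Filter Topology

section

variable {𝕜 E : Type*} [NontriviallyNormedField 𝕜] [NormedAddCommGroup E] [NormedSpace 𝕜 E]

theorem ContinuousLinearMap.apply_eq_snd_mul_add (L : E × 𝕜 →L[𝕜] 𝕜) (q : E × 𝕜) :
    L q = q.2 * L (0, 1) + L (q.1, 0) := by
  rw [← smul_eq_mul, ← map_smul, ← map_add]
  simp

theorem HasStrictFDerivAt.implicit_of_local_left_inverse [CompleteSpace 𝕜] [CompleteSpace E]
    {f g : E × 𝕜 → 𝕜} {f' : E × 𝕜 →L[𝕜] 𝕜} {p : E × 𝕜} (hf : HasStrictFDerivAt f f' p)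
    (hA : f' (0, 1) ≠ 0) (hg : ∀ᶠ q in 𝓝 p, g (q.1, f q) = q.2) :
    HasStrictFDerivAt g ((f' (0, 1))⁻¹ • (ContinuousLinearMap.snd 𝕜 E 𝕜 -
      f'.comp ((ContinuousLinearMap.fst 𝕜 E 𝕜).prod 0))) (p.1, f p) := by
  -- `e (u, w) = (u, w * f' (0, 1) + f' (u, 0))` is the derivative of `q ↦ (q.1, f q)`
  set e := (ContinuousLinearEquiv.refl 𝕜 E).skewProd
    (ContinuousLinearEquiv.unitsEquivAut 𝕜 (Units.mk0 _ hA)) (f'.comp (.inl 𝕜 E 𝕜))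
  have hgraph : HasStrictFDerivAt (fun q => (q.1, f q)) (e : E × 𝕜 →L[𝕜] E × 𝕜) p := by
    refine (hasStrictFDerivAt_fst.prodMk hf).congr_fderiv ?_
    refine ContinuousLinearMap.ext fun q => Prod.ext rfl ?_
    simpa [e] using f'.apply_eq_snd_mul_add q
  have hinv := (hgraph.to_local_left_inverse (g := fun q => (q.1, g q))
    (hg.mono fun q hq => Prod.ext rfl hq)).snd
  refine hinv.congr_fderiv ?_
  ext q <;> simp [e, mul_comm]


theorem HasFDerivAt.comp_hasDerivAt_prodMk₃ {F : Type*} [NormedAddCommGroup F] [NormedSpace 𝕜 F]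
    {H : 𝕜 × 𝕜 × 𝕜 → F} {H' : 𝕜 × 𝕜 × 𝕜 →L[𝕜] F} {a b c : 𝕜 → 𝕜} {a' b' c' x : 𝕜}
    (hH : HasFDerivAt H H' (a x, b x, c x)) (ha : HasDerivAt a a' x) (hb : HasDerivAt b b' x)
    (hc : HasDerivAt c c' x) :
    HasDerivAt (fun y => H (a y, b y, c y))
      (a' • H' (1, 0, 0) + b' • H' (0, 1, 0) + c' • H' (0, 0, 1)) x := by
  refine (hH.comp_hasDerivAt x (ha.prodMk (hb.prodMk hc))).congr_deriv ?_
  rw [← map_smul, ← map_smul, ← map_smul, ← map_add, ← map_add]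
  simp

theorem hasDerivAt_implicit_radial [CompleteSpace 𝕜] {H Ψ : 𝕜 → 𝕜 → 𝕜 → 𝕜}
    {H' : 𝕜 × 𝕜 × 𝕜 →L[𝕜] 𝕜} {t ϑ r : 𝕜}
    (hH : HasStrictFDerivAt (fun p : 𝕜 × 𝕜 × 𝕜 => H p.1 p.2.1 p.2.2) H' (t, ϑ, r))
    (hA : H' (0, 0, 1) ≠ 0) (hΨ : ∀ᶠ q in 𝓝 (t, r), Ψ ϑ q.1 (H q.1 ϑ q.2) = q.2) :
    HasDerivAt (Ψ ϑ t) (H' (0, 0, 1))⁻¹ (H t ϑ r) ∧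
      HasDerivAt (fun s => Ψ ϑ s (H t ϑ r)) (-(H' (1, 0, 0) * (H' (0, 0, 1))⁻¹)) t := by
  have hf : HasStrictFDerivAt (fun q : 𝕜 × 𝕜 => H q.1 ϑ q.2)
      (H'.comp ((ContinuousLinearMap.fst 𝕜 𝕜 𝕜).prod ((0 : 𝕜 × 𝕜 →L[𝕜] 𝕜).prod
        (ContinuousLinearMap.snd 𝕜 𝕜 𝕜)))) (t, r) :=
    hH.comp (f := fun q : 𝕜 × 𝕜 => (q.1, ϑ, q.2)) (t, r) (hasStrictFDerivAt_fst.prodMk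
      ((hasStrictFDerivAt_const ϑ _).prodMk hasStrictFDerivAt_snd))
  have hg := (hf.implicit_of_local_left_inverse (g := fun q => Ψ ϑ q.1 q.2) (by simpa using hA)
    hΨ).hasFDerivAt
  constructor
  · simpa [Function.comp_def, Prod.mk_zero_zero] using hg.comp_hasDerivAt_of_eq (H t ϑ r)
      ((hasDerivAt_const _ t).prodMk (hasDerivAt_id _)) rfl
  · simpa [Function.comp_def, mul_comm] using hg.comp_hasDerivAt_of_eq t
      ((hasDerivAt_id t).prodMk (hasDerivAt_const _ (H t ϑ r))) rfl

theorem hasDerivAt_hamiltonian_reparam {H : 𝕜 × 𝕜 × 𝕜 → 𝕜} {H' : 𝕜 × 𝕜 × 𝕜 →L[𝕜] 𝕜}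
    {τ ρ : 𝕜 → 𝕜} {ϑ : 𝕜} (hH : HasFDerivAt H H' (τ ϑ, ϑ, ρ (τ ϑ))) (hA : H' (0, 0, 1) ≠ 0)
    (hτ : HasDerivAt τ (H' (0, 0, 1))⁻¹ ϑ) (hρ : HasDerivAt ρ (-H' (0, 1, 0)) (τ ϑ)) :
    HasDerivAt (fun ϑ => H (τ ϑ, ϑ, ρ (τ ϑ))) (H' (1, 0, 0) * (H' (0, 0, 1))⁻¹) ϑ := by
  refine (hH.comp_hasDerivAt_prodMk₃ hτ (hasDerivAt_id ϑ) (hρ.comp ϑ hτ)).congr_deriv ?_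
  simp only [smul_eq_mul]
  field_simp
  ring

end

theorem stmt7_general (calH Ψ : ℝ → ℝ → ℝ → ℝ)
    (hH : ContDiffOn ℝ 1 (fun p : ℝ × ℝ × ℝ => calH p.1 p.2.1 p.2.2)
      {p : ℝ × ℝ × ℝ | 0 < p.2.2})
    (hpos : ∀ t θ ρ : ℝ, 0 < ρ → 0 < deriv (fun r => calH t θ r) ρ)
    (hinv1 : ∀ t θ ρ : ℝ, 0 < ρ → Ψ θ t (calH t θ ρ) = ρ)
    (I J : Set ℝ) (hJ : IsOpen J)
    (θ ρ : ℝ → ℝ) (hρpos : ∀ t ∈ I, 0 < ρ t)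
    (hθsys : ∀ t ∈ I, HasDerivAt θ (deriv (fun r => calH t (θ t) r) (ρ t)) t)
    (hρsys : ∀ t ∈ I, HasDerivAt ρ (-(deriv (fun a => calH t a (ρ t)) (θ t))) t)
    (τ : ℝ → ℝ) (hτmaps : Set.MapsTo τ J I)
    (hθτ : ∀ ϑ ∈ J, θ (τ ϑ) = ϑ)
    (hτd : ∀ ϑ ∈ J, DifferentiableAt ℝ τ ϑ)
    (h : ℝ → ℝ)
    (hdefh : ∀ ϑ : ℝ, h ϑ = calH (τ ϑ) ϑ (ρ (τ ϑ))) :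
    ∀ ϑ ∈ J,
      HasDerivAt τ (deriv (fun a => Ψ ϑ (τ ϑ) a) (h ϑ)) ϑ ∧
      HasDerivAt h (-(deriv (fun s => Ψ ϑ s (h ϑ)) (τ ϑ))) ϑ := by
  intro ϑ hϑ
  have ht : τ ϑ ∈ I := hτmaps hϑ
  have hr : 0 < ρ (τ ϑ) := hρpos _ ht
  have hH' := (hH.contDiffAt (x := (τ ϑ, ϑ, ρ (τ ϑ)))
    ((isOpen_lt continuous_const (by fun_prop)).mem_nhds hr)).hasStrictFDerivAt one_ne_zero
  set H' := fderiv ℝ (fun p : ℝ × ℝ × ℝ => calH p.1 p.2.1 p.2.2) (τ ϑ, ϑ, ρ (τ ϑ))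
  have hHρ : HasDerivAt (calH (τ ϑ) ϑ) (H' (0, 0, 1)) (ρ (τ ϑ)) := by
    simpa using hH'.hasFDerivAt.comp_hasDerivAt_prodMk₃ (hasDerivAt_const _ (τ ϑ))
      (hasDerivAt_const _ ϑ) (hasDerivAt_id _)
  have hHθ : HasDerivAt (fun a => calH (τ ϑ) a (ρ (τ ϑ))) (H' (0, 1, 0)) ϑ := by
    simpa using hH'.hasFDerivAt.comp_hasDerivAt_prodMk₃ (hasDerivAt_const _ (τ ϑ))
      (hasDerivAt_id ϑ) (hasDerivAt_const _ (ρ (τ ϑ)))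
  have hA : H' (0, 0, 1) ≠ 0 := (hHρ.deriv ▸ hpos _ _ _ hr).ne'
  have hθ' : HasDerivAt θ (H' (0, 0, 1)) (τ ϑ) := by simpa [hθτ ϑ hϑ, hHρ.deriv] using hθsys _ ht
  have hρ' : HasDerivAt ρ (-H' (0, 1, 0)) (τ ϑ) := by simpa [hθτ ϑ hϑ, hHθ.deriv] using hρsys _ ht
  have hτ' : HasDerivAt τ (H' (0, 0, 1))⁻¹ ϑ :=
    .of_local_left_inverse (hτd ϑ hϑ).continuousAt hθ' hA
      (eventually_of_mem (hJ.mem_nhds hϑ) hθτ)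
  obtain ⟨hΨh, hΨt⟩ := hasDerivAt_implicit_radial (Ψ := Ψ) hH' hA
    (((continuous_snd.tendsto _).eventually (eventually_gt_nhds hr)).mono fun q hq =>
      hinv1 _ _ _ hq)
  rw [hdefh ϑ, hΨh.deriv, hΨt.deriv, neg_neg, funext hdefh]
  exact ⟨hτ', hasDerivAt_hamiltonian_reparam hH'.hasFDerivAt hA hτ' hρ'⟩

/-- From times to angles: if `(θ, ρ)` solves `θ̇ = ∂_ρ ℋ`, `−ρ̇ = ∂_θ ℋ` with `θ̇ > 0`,
`τ` is the inverse of `θ`, and `h(ϑ) = ℋ(τ(ϑ), ϑ, ρ(τ(ϑ)))`, then `(τ, h)` solves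
`τ' = ∂_h Ψ(ϑ, τ, h)`, `−h' = ∂_τ Ψ(ϑ, τ, h)`, where `Ψ` is the implicit function of
`ℋ` in the radial variable. -/
theorem stmt7 (calH Ψ : ℝ → ℝ → ℝ → ℝ)
    (hH : ContDiffOn ℝ 1 (fun p : ℝ × ℝ × ℝ => calH p.1 p.2.1 p.2.2)
      {p : ℝ × ℝ × ℝ | 0 < p.2.2})
    (hΨ : ContDiffOn ℝ 1 (fun p : ℝ × ℝ × ℝ => Ψ p.1 p.2.1 p.2.2)
      {p : ℝ × ℝ × ℝ | 0 < p.2.2})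
    (hpos : ∀ t θ ρ : ℝ, 0 < ρ → 0 < deriv (fun r => calH t θ r) ρ)
    (hinv1 : ∀ t θ ρ : ℝ, 0 < ρ → Ψ θ t (calH t θ ρ) = ρ)
    (hinv2 : ∀ ϑ τ h : ℝ, 0 < h → calH τ ϑ (Ψ ϑ τ h) = h)
    (I J : Set ℝ) (hI : IsOpen I) (hJ : IsOpen J)
    (θ ρ : ℝ → ℝ) (hρpos : ∀ t ∈ I, 0 < ρ t)
    (hθsys : ∀ t ∈ I, HasDerivAt θ (deriv (fun r => calH t (θ t) r) (ρ t)) t)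
    (hρsys : ∀ t ∈ I, HasDerivAt ρ (-(deriv (fun a => calH t a (ρ t)) (θ t))) t)
    (hθpos : ∀ t ∈ I, 0 < deriv θ t)
    (τ : ℝ → ℝ) (hτmaps : Set.MapsTo τ J I) (hθmaps : Set.MapsTo θ I J)
    (hτθ : ∀ t ∈ I, τ (θ t) = t) (hθτ : ∀ ϑ ∈ J, θ (τ ϑ) = ϑ)
    (hτd : ∀ ϑ ∈ J, DifferentiableAt ℝ τ ϑ)
    (h : ℝ → ℝ)
    (hdefh : ∀ ϑ : ℝ, h ϑ = calH (τ ϑ) ϑ (ρ (τ ϑ))) :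
    ∀ ϑ ∈ J,
      HasDerivAt τ (deriv (fun a => Ψ ϑ (τ ϑ) a) (h ϑ)) ϑ ∧
      HasDerivAt h (-(deriv (fun s => Ψ ϑ s (h ϑ)) (τ ϑ))) ϑ :=
  stmt7_general calH Ψ hH hpos hinv1 I J hJ θ ρ hρpos hθsys hρsys τ hτmaps hθτ hτd h hdefh
end

section
/- Let z = (x,y) be a C¹ solution on [t₀, +∞) of ẋ = f(t,x,y), −ẏ = g(t,x,y) staying in the open first quadrant {x > 0, y > 0}, with x(t) ≥ δ' > 0 for all t ≥ t₀, and suppose there is c' > 0 such that g(t,x(t),y(t))x(t) + f(t,x(t),y(t))y(t) ≥ c'(x(t)² + y(t)²) for all t ≥ t₀. Then writing z in modified polar coordinates, θ̇(t) ≥ c' for all t ≥ t₀; consequently z cannot remain in the first quadrant for all t ≥ t₀ (it reaches the positive x-axis, i.e., y vanishes, in finite time). -/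
open Set

/-!
In modified polar coordinates `y / x = cot θ`. Along the solution,
`d/dt (y / x) = (ẏ x - y ẋ) / x² = -(g x + f y) / x² ≤ -c' (x² + y²) / x² ≤ -c'`,
so the positive function `y / x` would decrease at least linearly forever, which is impossible.
-/

lemma exists_nonpos_of_hasDerivAt_le_neg {u u' : ℝ → ℝ} {t₀ c : ℝ} (hc : 0 < c)
    (hu : ∀ t, t₀ ≤ t → HasDerivAt u (u' t) t) (hu' : ∀ t, t₀ ≤ t → u' t ≤ -c) :
    ∃ t, t₀ ≤ t ∧ u t ≤ 0 := by
  have hinterior : ∀ s ∈ interior (Ici t₀), t₀ ≤ s := fun s hs => by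
    rw [interior_Ici] at hs
    exact le_of_lt hs
  have hdecay : ∀ t, t₀ ≤ t → u t - u t₀ ≤ -c * (t - t₀) := fun t ht =>
    (convex_Ici t₀).image_sub_le_mul_sub_of_deriv_le
      (fun s hs => (hu s hs).continuousAt.continuousWithinAt)
      (fun s hs => (hu s (hinterior s hs)).differentiableAt.differentiableWithinAt)
      (fun s hs => (hu s (hinterior s hs)).deriv ▸ hu' s (hinterior s hs))
      t₀ (mem_Ici.2 le_rfl) t ht ht
  have hT : t₀ ≤ t₀ + |u t₀| / c := le_add_of_nonneg_right (by positivity)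
  refine ⟨t₀ + |u t₀| / c, hT, ?_⟩
  have hcancel : c * (|u t₀| / c) = |u t₀| := mul_div_cancel₀ _ hc.ne'
  linarith [hdecay _ hT, le_abs_self (u t₀)]

lemma neg_mul_sub_mul_div_sq_le_neg {a b p q c : ℝ} (ha : 0 < a) (hc : 0 ≤ c)
    (h : c * (a ^ 2 + b ^ 2) ≤ q * a + p * b) : (-q * a - b * p) / a ^ 2 ≤ -c := by
  rw [div_le_iff₀ (by positivity)]
  nlinarith [mul_nonneg hc (sq_nonneg b)]

theorem stmt10_general (f g : ℝ → ℝ → ℝ → ℝ)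
    (t₀ c' : ℝ) (hc' : 0 < c')
    (x y θ : ℝ → ℝ)
    (hx : ∀ t, t₀ ≤ t → HasDerivAt x (f t (x t) (y t)) t)
    (hy : ∀ t, t₀ ≤ t → HasDerivAt y (-(g t (x t) (y t))) t)
    (hquad : ∀ t, t₀ ≤ t → 0 < x t ∧ 0 < y t)
    (hest : ∀ t, t₀ ≤ t →
      c' * ((x t) ^ 2 + (y t) ^ 2) ≤ g t (x t) (y t) * x t + f t (x t) (y t) * y t) :
    (∀ t, t₀ ≤ t → c' ≤ deriv θ t) ∧ False := by
  have hcot : ∀ t, t₀ ≤ t → HasDerivAt (fun s => y s / x s)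
      ((-(g t (x t) (y t)) * x t - y t * f t (x t) (y t)) / x t ^ 2) t :=
    fun t ht => (hy t ht).div (hx t ht) (hquad t ht).1.ne'
  obtain ⟨t, ht, hnonpos⟩ := exists_nonpos_of_hasDerivAt_le_neg hc' hcot
    fun t ht => neg_mul_sub_mul_div_sq_le_neg (hquad t ht).1 hc'.le (hest t ht)
  have hpos : 0 < y t / x t := div_pos (hquad t ht).2 (hquad t ht).1
  exact absurd hnonpos hpos.not_ge

/-- A solution staying in the open first quadrant for all `t ≥ t₀`, with `x ≥ δ' > 0`
and the rotational estimate `g x + f y ≥ c'(x² + y²)`, has `θ̇ ≥ c'`; consequently the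
assumptions are contradictory: the solution cannot remain in the first quadrant
forever (it must reach the positive `x`-axis in finite time). -/
theorem stmt10 (f g : ℝ → ℝ → ℝ → ℝ)
    (hf : Continuous fun p : ℝ × ℝ × ℝ => f p.1 p.2.1 p.2.2)
    (hg : Continuous fun p : ℝ × ℝ × ℝ => g p.1 p.2.1 p.2.2)
    (t₀ δ' c' : ℝ) (hδ' : 0 < δ') (hc' : 0 < c')
    (x y θ ρ : ℝ → ℝ)
    (hx : ∀ t, t₀ ≤ t → HasDerivAt x (f t (x t) (y t)) t)
    (hy : ∀ t, t₀ ≤ t → HasDerivAt y (-(g t (x t) (y t))) t)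
    (hquad : ∀ t, t₀ ≤ t → 0 < x t ∧ 0 < y t)
    (hxδ : ∀ t, t₀ ≤ t → δ' ≤ x t)
    (hest : ∀ t, t₀ ≤ t →
      c' * ((x t) ^ 2 + (y t) ^ 2) ≤ g t (x t) (y t) * x t + f t (x t) (y t) * y t)
    (hρpos : ∀ t, t₀ ≤ t → 0 < ρ t)
    (hθd : ∀ t, t₀ ≤ t → DifferentiableAt ℝ θ t)
    (hρd : ∀ t, t₀ ≤ t → DifferentiableAt ℝ ρ t)
    (hpolar : ∀ t, t₀ ≤ t → x t = Real.sqrt (2 * ρ t) * Real.sin (θ t) ∧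
      y t = Real.sqrt (2 * ρ t) * Real.cos (θ t)) :
    (∀ t, t₀ ≤ t → c' ≤ deriv θ t) ∧ False :=
  stmt10_general f g t₀ c' hc' x y θ hx hy hquad hest
end

section
/- Let (θ, ρ) be the modified polar coordinates of a C¹ nonzero solution of a planar system, defined on [t₀, +∞), and suppose there exists a continuous function η : [0,2π] → ]0,+∞[, extended 2π-periodically, such that θ̇(t) ≥ η(θ(t)) for all t ≥ t₀ and ∫₀^{2π} ds/η(s) < +∞. If θ(t) remains in an interval of length at most 2π for all t ≥ t₀, then t − t₀ ≤ ∫₀^{2π} ds/η(s) for all t ≥ t₀, a contradiction; hence θ(t) increases by more than 2π in finite time. -/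
open Real intervalIntegral

/-! Along the trajectory, `t ↦ ∫_{θ t₀}^{θ t} ds/η(s) - t` has derivative `θ̇/η(θ) - 1 ≥ 0`, so the
elapsed time is bounded by `∫_{θ t₀}^{θ t} ds/η(s)`. While `θ` has gained at most `2π`, periodicity
bounds this by `∫₀^{2π} ds/η(s)`; hence `θ` cannot stay within `2π` of `θ t₀` beyond that time. -/

theorem sub_le_integral_one_div_of_le_deriv {θ θ' η : ℝ → ℝ} {a b : ℝ} (hab : a ≤ b)
    (hη : Continuous η) (hηpos : ∀ s, 0 < η s)
    (hθ : ∀ t ∈ Set.Icc a b, HasDerivAt θ (θ' t) t)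
    (hθη : ∀ t ∈ Set.Icc a b, η (θ t) ≤ θ' t) :
    b - a ≤ ∫ s in θ a..θ b, 1 / η s := by
  set F : ℝ → ℝ := fun t => (∫ s in θ a..θ t, 1 / η s) - t
  have hinv : Continuous fun s => 1 / η s :=
    continuous_const.div hη fun s => (hηpos s).ne'
  have hF : ∀ t ∈ Set.Icc a b, HasDerivAt F (1 / η (θ t) * θ' t - 1) t := fun t ht =>
    ((hinv.integral_hasStrictDerivAt (θ a) (θ t)).hasDerivAt.comp t (hθ t ht)).sub
      (hasDerivAt_id t)
  have hFmono : MonotoneOn F (Set.Icc a b) := by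
    refine monotoneOn_of_hasDerivWithinAt_nonneg (convex_Icc a b)
      (fun t ht => (hF t ht).continuousAt.continuousWithinAt)
      (fun t ht => (hF t (interior_subset ht)).hasDerivWithinAt) fun t ht => ?_
    have ht := interior_subset ht
    rw [sub_nonneg, one_div_mul_eq_div, one_le_div (hηpos _)]
    exact hθη t ht
  have := hFmono (Set.left_mem_Icc.2 hab) (Set.right_mem_Icc.2 hab) hab
  simp only [F, integral_same] at this
  linarith

theorem Function.Periodic.intervalIntegral_le_of_le_add {g : ℝ → ℝ} {T a b : ℝ}
    (hg : Function.Periodic g T) (hgc : Continuous g) (hgnn : ∀ s, 0 ≤ g s)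
    (hab : a ≤ b) (hbT : b ≤ a + T) :
    ∫ s in a..b, g s ≤ ∫ s in (0 : ℝ)..T, g s := by
  calc ∫ s in a..b, g s ≤ ∫ s in a..a + T, g s :=
        integral_mono_interval le_rfl hab hbT (Filter.Eventually.of_forall hgnn)
          (hgc.intervalIntegrable _ _)
    _ = ∫ s in (0 : ℝ)..T, g s := by simpa using hg.intervalIntegral_add_eq a 0

/-- If `θ̇(t) ≥ η(θ(t))` with `η` continuous, positive and `2π`-periodic, then as long
as `θ` has increased by at most `2π`, the elapsed time is at most `∫₀^{2π} ds/η(s)`;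
hence `θ` increases by more than `2π` in finite time. -/
theorem stmt11 (t₀ : ℝ) (θ : ℝ → ℝ) (η : ℝ → ℝ)
    (hη : Continuous η) (hηpos : ∀ s, 0 < η s)
    (hηper : ∀ s, η (s + 2 * Real.pi) = η s)
    (hθdiff : ∀ t, t₀ ≤ t → HasDerivAt θ (deriv θ t) t)
    (hθmono : StrictMonoOn θ (Set.Ici t₀))
    (hθη : ∀ t, t₀ ≤ t → η (θ t) ≤ deriv θ t) :
    (∀ t, t₀ ≤ t → θ t - θ t₀ ≤ 2 * Real.pi →
      t - t₀ ≤ ∫ s in (0 : ℝ)..(2 * Real.pi), 1 / η s) ∧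
    (∃ t, t₀ < t ∧ 2 * Real.pi < θ t - θ t₀) := by
  have hbound : ∀ t, t₀ ≤ t → θ t - θ t₀ ≤ 2 * π →
      t - t₀ ≤ ∫ s in (0 : ℝ)..(2 * π), 1 / η s := by
    intro t ht hθt
    have hper : Function.Periodic (fun s => 1 / η s) (2 * π) := fun s => by simp only [hηper]
    calc t - t₀ ≤ ∫ s in θ t₀..θ t, 1 / η s :=
          sub_le_integral_one_div_of_le_deriv ht hη hηpos (fun s hs => hθdiff s hs.1)
            fun s hs => hθη s hs.1
      _ ≤ _ := hper.intervalIntegral_le_of_le_add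
          (continuous_const.div hη fun s => (hηpos s).ne') (fun s => (one_div_pos.2 (hηpos s)).le)
          (hθmono.monotoneOn Set.self_mem_Ici (Set.mem_Ici.2 ht) ht) (by linarith)
  refine ⟨hbound, ?_⟩
  set I := ∫ s in (0 : ℝ)..(2 * π), 1 / η s
  have hI : 0 ≤ I := integral_nonneg Real.two_pi_pos.le fun s _ => (one_div_pos.2 (hηpos s)).le
  by_contra! hstuck
  have := hbound (t₀ + I + 1) (by linarith) (hstuck _ (by linarith))
  linarith
end

section
/- Let λ > 0, M > 0, m a positive integer, and let θ : [t₀, t₁] → ℝ be C¹ with θ(t₁) − θ(t₀) = 2πm and θ̇(t) ≥ (√λ/2)(cos²θ(t) + M sin²θ(t)) for all t ∈ [t₀, t₁]. Then t₁ − t₀ ≤ (4πm)/(√λ √M). In particular, if M > (4πm/(√λ kT))², then t₁ − t₀ < kT. -/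
/-!
With `a = √M`, the function `y ↦ arctan (a tan y) / a` is a primitive of
`1 / (cos² y + M sin² y)`; rewriting it as
`(y + arctan ((a - 1) sin y cos y / (cos² y + a sin² y))) / a` makes it smooth on all of `ℝ`
and shows that it increases by exactly `2π / a` over each full turn. The differential
inequality says that this primitive, composed with `θ`, grows at rate at least `√λ / 2`, so
`m` full turns take time at most `(2πm / a) / (√λ / 2)`.
-/

open Real Set

theorem cos_sq_add_mul_sin_sq_pos {c : ℝ} (hc : 0 < c) (x : ℝ) :
    0 < cos x ^ 2 + c * sin x ^ 2 := by
  rcases (sq_nonneg (sin x)).lt_or_eq with hs | hs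
  · nlinarith [sq_nonneg (cos x), mul_pos hc hs]
  · nlinarith [sin_sq_add_cos_sq x]

noncomputable def rotationPrimitive (a y : ℝ) : ℝ :=
  (y + arctan ((a - 1) * sin y * cos y / (cos y ^ 2 + a * sin y ^ 2))) / a

theorem hasDerivAt_rotationPrimitive {a : ℝ} (ha : 0 < a) (x : ℝ) :
    HasDerivAt (rotationPrimitive a) (cos x ^ 2 + a ^ 2 * sin x ^ 2)⁻¹ x := by
  have hD := cos_sq_add_mul_sin_sq_pos ha x
  have hD2 := cos_sq_add_mul_sin_sq_pos (pow_pos ha 2) x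
  have hquot := (((hasDerivAt_sin x).const_mul (a - 1)).mul (hasDerivAt_cos x)).div
    (((hasDerivAt_cos x).pow 2).add (((hasDerivAt_sin x).pow 2).const_mul a)) hD.ne'
  refine (((hasDerivAt_id x).add hquot.arctan).div_const a).congr_deriv ?_
  have hpy := sin_sq_add_cos_sq x
  have hu : 0 < 1 + ((a - 1) * sin x * cos x / (cos x ^ 2 + a * sin x ^ 2)) ^ 2 := by
    positivity
  simp only [Pi.mul_apply, Pi.div_apply, Pi.add_apply, Pi.pow_apply]
  field_simp [hD.ne', hD2.ne', hu.ne', ha.ne']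
  -- `(cos² + a sin²)² + (a - 1)² sin² cos² = (cos² + a² sin²) (cos² + sin²)`
  ring_nf
  grind

theorem rotationPrimitive_add_nat_mul_two_pi (a y : ℝ) (m : ℕ) :
    rotationPrimitive a (y + m * (2 * π)) = rotationPrimitive a y + 2 * π * m / a := by
  simp only [rotationPrimitive, sin_add_nat_mul_two_pi, cos_add_nat_mul_two_pi]
  ring

theorem mul_sub_le_sub_comp_of_hasDerivAt_inv {F g θ : ℝ → ℝ} {c t₀ t₁ : ℝ}
    (hF : ∀ y, HasDerivAt F (g y)⁻¹ y) (hg : ∀ y, 0 < g y)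
    (hθ : ContinuousOn θ (Icc t₀ t₁)) (hθd : DifferentiableOn ℝ θ (Ioo t₀ t₁))
    (hder : ∀ t ∈ Ioo t₀ t₁, c * g (θ t) ≤ deriv θ t) (ht : t₀ ≤ t₁) :
    c * (t₁ - t₀) ≤ F (θ t₁) - F (θ t₀) := by
  have hθd' : ∀ t ∈ Ioo t₀ t₁, HasDerivAt θ (deriv θ t) t := fun t htm =>
    ((hθd t htm).differentiableAt (Ioo_mem_nhds htm.1 htm.2)).hasDerivAt
  refine (convex_Icc t₀ t₁).mul_sub_le_image_sub_of_le_deriv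
    (continuous_iff_continuousAt.2 (fun y => (hF y).continuousAt) |>.comp_continuousOn hθ)
    ?_ ?_ t₀ (left_mem_Icc.2 ht) t₁ (right_mem_Icc.2 ht) ht <;> rw [interior_Icc]
  · exact fun t htm => ((hF (θ t)).comp t (hθd' t htm)).differentiableAt.differentiableWithinAt
  · intro t htm
    rw [((hF (θ t)).comp t (hθd' t htm)).deriv, inv_mul_eq_div, le_div_iff₀ (hg (θ t))]
    exact hder t htm

theorem mul_sub_le_of_full_turns {θ : ℝ → ℝ} {c a t₀ t₁ : ℝ} {m : ℕ} (ha : 0 < a)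
    (hθ : ContinuousOn θ (Icc t₀ t₁)) (hθd : DifferentiableOn ℝ θ (Ioo t₀ t₁))
    (hrot : θ t₁ - θ t₀ = 2 * π * m)
    (hder : ∀ t ∈ Ioo t₀ t₁, c * (cos (θ t) ^ 2 + a ^ 2 * sin (θ t) ^ 2) ≤ deriv θ t)
    (ht : t₀ ≤ t₁) :
    c * (t₁ - t₀) ≤ 2 * π * m / a := by
  have hθ₁ : θ t₁ = θ t₀ + m * (2 * π) := by linear_combination hrot
  have h := mul_sub_le_sub_comp_of_hasDerivAt_inv (hasDerivAt_rotationPrimitive ha)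
    (fun y => cos_sq_add_mul_sin_sq_pos (pow_pos ha 2) y) hθ hθd hder ht
  rwa [hθ₁, rotationPrimitive_add_nat_mul_two_pi, add_sub_cancel_left] at h

theorem div_mul_sqrt_lt_of_sq_div_mul_lt {q s K M : ℝ} (hq : 0 ≤ q) (hs : 0 < s) (hK : 0 < K)
    (h : (q / (s * K)) ^ 2 < M) : q / (s * √M) < K := by
  have hsK : q / (s * K) < √M := (lt_sqrt (by positivity)).2 h
  have hM : 0 < √M := (div_nonneg hq (by positivity)).trans_lt hsK
  rw [div_lt_iff₀ (mul_pos hs hK)] at hsK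
  rw [div_lt_iff₀ (mul_pos hs hM)]
  linarith

theorem stmt18_general (lam M : ℝ) (hlam : 0 < lam) (hM : 0 < M)
    (m k : ℕ) (hk : 0 < k) (T : ℝ) (hT : 0 < T)
    (t₀ t₁ : ℝ) (ht : t₀ ≤ t₁)
    (θ : ℝ → ℝ) (hθ : ContDiffOn ℝ 1 θ (Set.Icc t₀ t₁))
    (hrot : θ t₁ - θ t₀ = 2 * Real.pi * m)
    (hder : ∀ t ∈ Set.Icc t₀ t₁,
      Real.sqrt lam / 2 * ((Real.cos (θ t)) ^ 2 + M * (Real.sin (θ t)) ^ 2)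
        ≤ deriv θ t) :
    t₁ - t₀ ≤ 4 * Real.pi * m / (Real.sqrt lam * Real.sqrt M) ∧
    ((4 * Real.pi * m / (Real.sqrt lam * (k * T))) ^ 2 < M → t₁ - t₀ < k * T) := by
  have hl : 0 < √lam := sqrt_pos.2 hlam
  have hturns : √lam / 2 * (t₁ - t₀) ≤ 2 * π * m / √M := by
    refine mul_sub_le_of_full_turns (sqrt_pos.2 hM) hθ.continuousOn
      ((hθ.differentiableOn one_ne_zero).mono Ioo_subset_Icc_self) hrot (fun t htm => ?_) ht
    rw [sq_sqrt hM.le]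
    exact hder t (Ioo_subset_Icc_self htm)
  have hbound : t₁ - t₀ ≤ 4 * π * m / (√lam * √M) := by
    rw [le_div_iff₀ (mul_pos hl (sqrt_pos.2 hM))]
    rw [le_div_iff₀ (sqrt_pos.2 hM)] at hturns
    linarith
  refine ⟨hbound, fun h => hbound.trans_lt ?_⟩
  exact div_mul_sqrt_lt_of_sq_div_mul_lt (by positivity) hl (by positivity) h

/-- Time estimate for `m` full rotations: if `θ` is `C¹` on `[t₀, t₁]`,
`θ(t₁) − θ(t₀) = 2πm` and `θ̇ ≥ (√λ/2)(cos²θ + M sin²θ)`, then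
`t₁ − t₀ ≤ 4πm/(√λ √M)`; in particular `t₁ − t₀ < kT` as soon as
`M > (4πm/(√λ kT))²`. -/
theorem stmt18 (lam M : ℝ) (hlam : 0 < lam) (hM : 0 < M)
    (m k : ℕ) (hm : 0 < m) (hk : 0 < k) (T : ℝ) (hT : 0 < T)
    (t₀ t₁ : ℝ) (ht : t₀ ≤ t₁)
    (θ : ℝ → ℝ) (hθ : ContDiffOn ℝ 1 θ (Set.Icc t₀ t₁))
    (hrot : θ t₁ - θ t₀ = 2 * Real.pi * m)
    (hder : ∀ t ∈ Set.Icc t₀ t₁,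
      Real.sqrt lam / 2 * ((Real.cos (θ t)) ^ 2 + M * (Real.sin (θ t)) ^ 2)
        ≤ deriv θ t) :
    t₁ - t₀ ≤ 4 * Real.pi * m / (Real.sqrt lam * Real.sqrt M) ∧
    ((4 * Real.pi * m / (Real.sqrt lam * (k * T))) ^ 2 < M → t₁ - t₀ < k * T) :=
  stmt18_general lam M hlam hM m k hk T hT t₀ t₁ ht θ hθ hrot hder
end
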